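/- Let u be an even vertex of the diamond D_n, and suppose some cone u + K_k (for some k ∈ {0,1,2,3}) contains no closed vertex of D_n. Then in Trap on the open subgraph of D_n (odd vertices may be closed; all even vertices open; moves outside D_n forbidden) starting from u, the first player (Odin) has a winning strategy: always move in the axis direction into that cone. -/

import Mathlib

variable {V : Type*}

/-- A move to `w` is legal from history `h` if `w` is adjacent to the current
vertex (the head of `h`), has not been visited, and is allowed. -/
def TrapLegal (G : SimpleGraph V) (A : Set V) (h : List V) (w : V) : Prop :=
  ∃ c, h.head? = some c ∧ G.Adj c w ∧ w ∉ h ∧ w ∈ A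

open Classical in
/-- The evolution of Trap when the first player uses strategy `σ` and the
second player uses strategy `τ`, starting from `v`; the first player moves at
histories of odd length.  If the strategy of the player to move chooses an
illegal move, the history freezes. -/
noncomputable def trapPlay (G : SimpleGraph V) (A : Set V) (σ τ : List V → V) (v : V) :
    ℕ → List V
  | 0 => [v]
  | n + 1 =>
    let h := trapPlay G A σ τ v n
    let w := if h.length % 2 = 1 then σ h else τ h
    if TrapLegal G A h w then w :: h else h

/-- The nearest-neighbour grid graph on `ℤ²`. -/
def gridGraph : SimpleGraph (ℤ × ℤ) where
  Adj u v := |u.1 - v.1| + |u.2 - v.2| = 1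
  symm := by
    constructor
    intro u v h
    simpa [abs_sub_comm] using h
  loopless := by
    constructor
    intro u h
    simp at h

/-- The diamond `D_n = {u ∈ ℤ² : ‖u‖₁ < 2n}`. -/
def diamond (n : ℕ) : Set (ℤ × ℤ) :=
  {u | |u.1| + |u.2| < 2 * n}

/-- The cones `K₀ = {(x,y) : |y| < x}` and its rotations by `πk/2`. -/
def coneK : Fin 4 → Set (ℤ × ℤ)
  | 0 => {u | |u.2| < u.1}
  | 1 => {u | |u.1| < u.2}
  | 2 => {u | |u.2| < -u.1}
  | 3 => {u | |u.1| < -u.2}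

/-- The axis direction pointing into the cone `K_k`. -/
def coneDir : Fin 4 → ℤ × ℤ
  | 0 => (1, 0)
  | 1 => (0, 1)
  | 2 => (-1, 0)
  | 3 => (0, -1)

/-!
Measure vertices relative to `u` by their coordinates `along` and `across` the direction
`d = coneDir k`. Odin always stands on an even vertex `c` with `|across| ≤ along`; his target
`c + d` then lies strictly inside `u + K_k`, so it is open, and it stays in `D_n` because the
boundary of `D_n` is odd. From `c + d` the only neighbour one level lower is the visited `c`, so
Eve's moves never lower the level and keep her in the closed cone. Odin raises the level by one,
so his target is never visited before: he always has a legal move. Plays in the finite diamond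
are finite, hence Eve is eventually stuck.
-/

section TrapGame

variable {G : SimpleGraph V} {A : Set V} {σ τ : List V → V} {v : V}

theorem trapPlay_invariant (I : List V → Prop) (base : I [v])
    (odin : ∀ h, I h → h.length % 2 = 1 → TrapLegal G A h (σ h) → I (σ h :: h))
    (eve : ∀ h w, I h → h.length % 2 = 0 → TrapLegal G A h w → I (w :: h)) (m : ℕ) :
    I (trapPlay G A σ τ v m) := by
  induction m with
  | zero => exact base
  | succ m ih =>
    dsimp only [trapPlay]
    by_cases hodd : (trapPlay G A σ τ v m).length % 2 = 1
    · rw [if_pos hodd]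
      split_ifs with hleg
      exacts [odin _ ih hodd hleg, ih]
    · rw [if_neg hodd]
      split_ifs with hleg
      exacts [eve _ _ ih (by omega) hleg, ih]

theorem trapPlay_nodup (m : ℕ) : (trapPlay G A σ τ v m).Nodup :=
  trapPlay_invariant List.Nodup (List.nodup_singleton v)
    (fun _ hI _ ⟨_, _, _, hnew, _⟩ => List.nodup_cons.mpr ⟨hnew, hI⟩)
    (fun _ _ hI _ ⟨_, _, _, hnew, _⟩ => List.nodup_cons.mpr ⟨hnew, hI⟩) m

theorem mem_of_mem_trapPlay {S : Set V} (hv : v ∈ S) (hA : A ⊆ S) (m : ℕ) :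
    ∀ x ∈ trapPlay G A σ τ v m, x ∈ S :=
  trapPlay_invariant (fun h => ∀ x ∈ h, x ∈ S) (by simpa using hv)
    (fun _ hI _ ⟨_, _, _, _, hσ⟩ => List.forall_mem_cons.mpr ⟨hA hσ, hI⟩)
    (fun _ _ hI _ ⟨_, _, _, _, hw⟩ => List.forall_mem_cons.mpr ⟨hA hw, hI⟩) m

theorem length_trapPlay_le {S : Finset V} (hv : v ∈ S) (hA : A ⊆ S) (m : ℕ) :
    (trapPlay G A σ τ v m).length ≤ S.card := by
  classical
  rw [← List.toFinset_card_of_nodup (trapPlay_nodup m)]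
  exact Finset.card_le_card fun x hx =>
    mem_of_mem_trapPlay (S := (S : Set V)) hv hA m x (List.mem_toFinset.mp hx)

theorem exists_second_player_stuck {N : ℕ}
    (hσ : ∀ m, (trapPlay G A σ τ v m).length % 2 = 1 →
      TrapLegal G A (trapPlay G A σ τ v m) (σ (trapPlay G A σ τ v m)))
    (hN : ∀ m, (trapPlay G A σ τ v m).length ≤ N) :
    ∃ m, (trapPlay G A σ τ v m).length % 2 = 0 ∧
      ¬ TrapLegal G A (trapPlay G A σ τ v m) (τ (trapPlay G A σ τ v m)) := by
  by_contra! hτ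
  have hlen : ∀ m, (trapPlay G A σ τ v m).length = m + 1 := by
    intro m
    induction m with
    | zero => rfl
    | succ m ih =>
      dsimp only [trapPlay]
      by_cases hodd : (trapPlay G A σ τ v m).length % 2 = 1
      · rw [if_pos hodd, if_pos (hσ m hodd), List.length_cons, ih]
      · rw [if_neg hodd, if_pos (hτ m (by omega)), List.length_cons, ih]
  have := hN N
  rw [hlen] at this
  omega

end TrapGame

def along (k : Fin 4) : ℤ × ℤ →+ ℤ :=
  AddMonoidHom.mk' (fun p => p.1 * (coneDir k).1 + p.2 * (coneDir k).2)
    fun p q => by simp only [Prod.fst_add, Prod.snd_add]; ring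

def across (k : Fin 4) : ℤ × ℤ →+ ℤ :=
  AddMonoidHom.mk' (fun p => p.1 * (coneDir k).2 - p.2 * (coneDir k).1)
    fun p q => by simp only [Prod.fst_add, Prod.snd_add]; ring

theorem along_apply (k : Fin 4) (p : ℤ × ℤ) :
    along k p = p.1 * (coneDir k).1 + p.2 * (coneDir k).2 := rfl

theorem across_apply (k : Fin 4) (p : ℤ × ℤ) :
    across k p = p.1 * (coneDir k).2 - p.2 * (coneDir k).1 := rfl

@[simp] theorem along_coneDir (k : Fin 4) : along k (coneDir k) = 1 := by
  fin_cases k <;> rfl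

@[simp] theorem across_coneDir (k : Fin 4) : across k (coneDir k) = 0 := by
  fin_cases k <;> rfl

theorem mem_coneK_iff {k : Fin 4} {p : ℤ × ℤ} : p ∈ coneK k ↔ |across k p| < along k p := by
  fin_cases k <;> simp [coneK, coneDir, along_apply, across_apply, abs_neg]

theorem gridGraph_adj_iff {a b : ℤ × ℤ} : gridGraph.Adj a b ↔ |(b - a).1| + |(b - a).2| = 1 := by
  show |a.1 - b.1| + |a.2 - b.2| = 1 ↔ _
  rw [abs_sub_comm a.1, abs_sub_comm a.2]
  rfl

theorem gridGraph_adj_add_coneDir (c : ℤ × ℤ) (k : Fin 4) : gridGraph.Adj c (c + coneDir k) := by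
  rw [gridGraph_adj_iff, add_sub_cancel_left]
  fin_cases k <;> rfl

theorem abs_across_le_one {p : ℤ × ℤ} (hp : |p.1| + |p.2| = 1) (k : Fin 4) :
    |across k p| ≤ 1 := by
  obtain ⟨x, y⟩ := p
  fin_cases k <;> simp only [across_apply, coneDir] at hp ⊢ <;>
    rcases abs_cases x with ⟨_, _⟩ | ⟨_, _⟩ <;> rcases abs_cases y with ⟨_, _⟩ | ⟨_, _⟩ <;>
    simp [abs_le] <;> omega

theorem along_nonneg {p : ℤ × ℤ} (hp : |p.1| + |p.2| = 1) {k : Fin 4} (hne : p ≠ -coneDir k) :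
    0 ≤ along k p := by
  obtain ⟨x, y⟩ := p
  fin_cases k <;> simp [along_apply, coneDir, Prod.ext_iff] at hp hne ⊢ <;>
    rcases abs_cases x with ⟨_, _⟩ | ⟨_, _⟩ <;> rcases abs_cases y with ⟨_, _⟩ | ⟨_, _⟩ <;> omega

theorem even_iff_not_even_of_adj {a b : ℤ × ℤ} (h : gridGraph.Adj a b) :
    Even (a.1 + a.2) ↔ ¬ Even (b.1 + b.2) := by
  have h' : |a.1 - b.1| + |a.2 - b.2| = 1 := h
  simp only [Int.even_iff]
  rcases abs_cases (a.1 - b.1) with ⟨_, _⟩ | ⟨_, _⟩ <;>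
    rcases abs_cases (a.2 - b.2) with ⟨_, _⟩ | ⟨_, _⟩ <;> omega

/-- The boundary of `diamond n` consists of odd vertices, so it cannot be left from an even one. -/
theorem mem_diamond_of_adj {n : ℕ} {a b : ℤ × ℤ} (h : gridGraph.Adj a b) (ha : a ∈ diamond n)
    (he : Even (a.1 + a.2)) : b ∈ diamond n := by
  have h' : |a.1 - b.1| + |a.2 - b.2| = 1 := h
  simp only [diamond, Set.mem_ofPred_eq, Int.even_iff] at ha he ⊢
  rcases abs_cases (a.1 - b.1) with ⟨_, _⟩ | ⟨_, _⟩ <;>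
    rcases abs_cases (a.2 - b.2) with ⟨_, _⟩ | ⟨_, _⟩ <;>
    rcases abs_cases a.1 with ⟨_, _⟩ | ⟨_, _⟩ <;> rcases abs_cases a.2 with ⟨_, _⟩ | ⟨_, _⟩ <;>
    rcases abs_cases b.1 with ⟨_, _⟩ | ⟨_, _⟩ <;> rcases abs_cases b.2 with ⟨_, _⟩ | ⟨_, _⟩ <;>
    omega

theorem diamond_finite (n : ℕ) : (diamond n).Finite := by
  refine (Set.finite_Icc (-(2 * (n : ℤ)), -(2 * (n : ℤ))) (2 * (n : ℤ), 2 * (n : ℤ))).subset ?_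
  intro v hv
  simp only [diamond, Set.mem_ofPred_eq] at hv
  simp only [Set.mem_Icc, Prod.le_def]
  rcases abs_cases v.1 with ⟨_, _⟩ | ⟨_, _⟩ <;> rcases abs_cases v.2 with ⟨_, _⟩ | ⟨_, _⟩ <;> omega

section ConeStrategy

variable {u : ℤ × ℤ} {k : Fin 4}

def IsOdinVertex (u : ℤ × ℤ) (k : Fin 4) (c : ℤ × ℤ) : Prop :=
  Even (c.1 + c.2) ∧ |across k (c - u)| ≤ along k (c - u)

structure ConeStrategyInvariant (u : ℤ × ℤ) (k : Fin 4) (h : List (ℤ × ℤ)) : Prop where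
  along_le_head : ∀ v ∈ h, along k (v - u) ≤ along k (h.headI - u)
  odin_turn : h.length % 2 = 1 → IsOdinVertex u k h.headI
  eve_turn : h.length % 2 = 0 → ∃ c rest, h = (c + coneDir k) :: c :: rest ∧ IsOdinVertex u k c

theorem coneStrategyInvariant_singleton (hue : Even (u.1 + u.2)) :
    ConeStrategyInvariant u k [u] where
  along_le_head := by simp
  odin_turn _ := ⟨hue, by simp⟩
  eve_turn := by simp

theorem along_add_coneDir_sub (c : ℤ × ℤ) :
    along k (c + coneDir k - u) = along k (c - u) + 1 := by
  rw [add_sub_right_comm, map_add, along_coneDir]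

theorem across_add_coneDir_sub (c : ℤ × ℤ) :
    across k (c + coneDir k - u) = across k (c - u) := by
  rw [add_sub_right_comm, map_add, across_coneDir, add_zero]

namespace ConeStrategyInvariant

variable {h : List (ℤ × ℤ)}

theorem odin_move (hI : ConeStrategyInvariant u k h) (hodd : h.length % 2 = 1) :
    ConeStrategyInvariant u k ((h.headI + coneDir k) :: h) := by
  obtain ⟨c, rest, rfl⟩ := List.exists_cons_of_length_pos (by omega : 0 < h.length)
  refine ⟨?_, fun h' => by simp only [List.length_cons] at h' hodd; omega,
    fun _ => ⟨c, rest, rfl, hI.odin_turn hodd⟩⟩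
  intro v hv
  rcases List.mem_cons.mp hv with rfl | hv
  · exact le_rfl
  · simpa only [List.headI, along_add_coneDir_sub] using Int.le_add_one (hI.along_le_head v hv)

theorem eve_move {A : Set (ℤ × ℤ)} {w : ℤ × ℤ} (hI : ConeStrategyInvariant u k h)
    (heven : h.length % 2 = 0) (hleg : TrapLegal gridGraph A h w) :
    ConeStrategyInvariant u k (w :: h) := by
  obtain ⟨c, rest, rfl, hc_even, hc_cone⟩ := hI.eve_turn heven
  obtain ⟨_, hhead, hadj, hnew, -⟩ := hleg
  obtain rfl : _ = c + coneDir k := (Option.some_inj.mp hhead).symm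
  have hunit := gridGraph_adj_iff.mp hadj
  have hup : 0 ≤ along k (w - (c + coneDir k)) :=
    along_nonneg hunit fun hp => hnew <| List.mem_cons_of_mem _ <| by
      rw [sub_eq_iff_eq_add.mp hp, neg_add_cancel_comm_assoc]; exact List.mem_cons_self
  have hside := abs_across_le_one hunit k
  have hw_sub : w - u = w - (c + coneDir k) + (c + coneDir k - u) := by abel
  have hlevel : along k (c + coneDir k - u) ≤ along k (w - u) := by
    rw [hw_sub, map_add]; omega
  refine ⟨?_, fun _ => ⟨?_, ?_⟩, fun h' => by simp only [List.length_cons] at h' heven; omega⟩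
  · intro v hv
    rcases List.mem_cons.mp hv with rfl | hv
    · exact le_rfl
    · exact (hI.along_le_head v hv).trans hlevel
  · by_contra hw
    exact (even_iff_not_even_of_adj (gridGraph_adj_add_coneDir c k)).mp hc_even
      ((even_iff_not_even_of_adj hadj).mpr hw)
  · simp only [List.headI]
    rw [hw_sub, map_add, map_add, across_add_coneDir_sub, along_add_coneDir_sub]
    exact (abs_add_le _ _).trans (by omega)

theorem trapLegal_add_coneDir {n : ℕ} {closed : Set (ℤ × ℤ)}
    (hcone : ∀ w ∈ diamond n, w - u ∈ coneK k → w ∉ closed) (hI : ConeStrategyInvariant u k h)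
    (hodd : h.length % 2 = 1) (hD : ∀ x ∈ h, x ∈ diamond n) :
    TrapLegal gridGraph (diamond n \ closed) h (h.headI + coneDir k) := by
  obtain ⟨c, rest, rfl⟩ := List.exists_cons_of_length_pos (by omega : 0 < h.length)
  obtain ⟨hc_even, hc_cone⟩ := hI.odin_turn hodd
  have hD' := mem_diamond_of_adj (gridGraph_adj_add_coneDir c k) (hD c List.mem_cons_self) hc_even
  refine ⟨c, rfl, gridGraph_adj_add_coneDir c k, fun hmem => ?_, hD', hcone _ hD' ?_⟩
  · have := hI.along_le_head _ hmem
    simp only [List.headI, along_add_coneDir_sub] at this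
    omega
  · rw [mem_coneK_iff, along_add_coneDir_sub, across_add_coneDir_sub]
    omega

end ConeStrategyInvariant

end ConeStrategy

theorem odin_wins_from_unprotected_general
    (n : ℕ) (closed : Set (ℤ × ℤ))
    (u : ℤ × ℤ) (hu : u ∈ diamond n) (hue : Even (u.1 + u.2))
    (k : Fin 4) (hcone : ∀ w ∈ diamond n, w - u ∈ coneK k → w ∉ closed) :
    ∀ τ : List (ℤ × ℤ) → ℤ × ℤ, ∃ m : ℕ,
      (trapPlay gridGraph (diamond n \ closed)
          (fun h => h.headI + coneDir k) τ u m).length % 2 = 0 ∧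
      ¬ TrapLegal gridGraph (diamond n \ closed)
          (trapPlay gridGraph (diamond n \ closed)
            (fun h => h.headI + coneDir k) τ u m)
          (τ (trapPlay gridGraph (diamond n \ closed)
            (fun h => h.headI + coneDir k) τ u m)) := by
  intro τ
  have hI (m : ℕ) := trapPlay_invariant (G := gridGraph) (A := diamond n \ closed) (τ := τ)
    (ConeStrategyInvariant u k) (coneStrategyInvariant_singleton hue)
    (fun _ hI hodd _ => hI.odin_move hodd) (fun _ _ hI heven hleg => hI.eve_move heven hleg) m
  have hD (m : ℕ) := mem_of_mem_trapPlay (G := gridGraph) (σ := fun h => h.headI + coneDir k)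
    (τ := τ) hu (Set.sdiff_subset (t := closed)) m
  exact exists_second_player_stuck
    (fun m hodd => (hI m).trapLegal_add_coneDir hcone hodd (hD m))
    (length_trapPlay_le (S := (diamond_finite n).toFinset) (by simpa using hu) (by simp))

/-- In Trap on the open subgraph of the diamond `D_n`
(only odd vertices may be closed; moves outside `D_n` are forbidden), if the
initial vertex `u` is even and some cone `u + K_k` contains no closed vertex
of `D_n`, then the first player (Odin) wins with the strategy of always moving
in the axis direction into that cone. -/
theorem odin_wins_from_unprotected
    (n : ℕ) (hn : 0 < n) (closed : Set (ℤ × ℤ))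
    (hco : ∀ w ∈ closed, Odd (w.1 + w.2))
    (u : ℤ × ℤ) (hu : u ∈ diamond n) (hue : Even (u.1 + u.2))
    (k : Fin 4) (hcone : ∀ w ∈ diamond n, w - u ∈ coneK k → w ∉ closed) :
    ∀ τ : List (ℤ × ℤ) → ℤ × ℤ, ∃ m : ℕ,
      (trapPlay gridGraph (diamond n \ closed)
          (fun h => h.headI + coneDir k) τ u m).length % 2 = 0 ∧
      ¬ TrapLegal gridGraph (diamond n \ closed)
          (trapPlay gridGraph (diamond n \ closed)
            (fun h => h.headI + coneDir k) τ u m)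
          (τ (trapPlay gridGraph (diamond n \ closed)
            (fun h => h.headI + coneDir k) τ u m)) :=
  odin_wins_from_unprotected_general n closed u hu hue k hcone
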